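/- arXiv:1204.2967 — 6 statements merged into one kernel-verified Lean document; each statement's English description precedes it below -/
import Mathlib

section
/- Let Γ ⊂ Λ be full rank lattices in ℝ^n and ε ≥ 0. Suppose D = {d_1,…,d_l} is an ε-approximate transversal of Λ/Γ, i.e., there exist representatives d_1',…,d_l' of the l distinct cosets of Λ/Γ with |d_i − d_i'| ≤ ε for all i. Then for every m ∈ Γ*, the quantity |(1/l) Σ_{i=1}^l exp(2πi⟨m,d_i⟩) − δ| ≤ 2π|m|ε, where δ = 1 if m ∈ Λ* and δ = 0 if m ∈ Γ* \ Λ*. -/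
open scoped BigOperators
open Classical

def IsFullLattice {n : ℕ} (L : AddSubgroup (EuclideanSpace ℝ (Fin n))) : Prop :=
  ∃ b : Module.Basis (Fin n) ℝ (EuclideanSpace ℝ (Fin n)),
    L = AddSubgroup.closure (Set.range b)

def dualSet {n : ℕ} (S : Set (EuclideanSpace ℝ (Fin n))) : Set (EuclideanSpace ℝ (Fin n)) :=
  {x | ∀ g ∈ S, ∃ k : ℤ, (inner ℝ x g : ℝ) = (k : ℝ)}

/-!
Write `χ_m x = exp(2πi⟨m, x⟩)`, an additive character of `ℝⁿ` which is trivial on `Γ` for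
`m ∈ Γ*`. Translating an exact transversal `d'` of `Λ/Γ` by `g ∈ Λ` permutes it modulo `Γ`, so
`∑ χ_m (d'_i)` is fixed under multiplication by `χ_m g`; hence it is `l` if `χ_m` is trivial
on `Λ` (that is, `m ∈ Λ*`) and `0` otherwise. Finally `χ_m` is `2π|m|`-Lipschitz, so moving
each `d'_i` by at most `ε` changes the average by at most `2π|m|ε`.
-/

open Function

section Transversal

variable {G ι : Type*} [AddCommGroup G]

structure IsCosetTransversal (Γ Λ : AddSubgroup G) (d : ι → G) : Prop where
  mem : ∀ i, d i ∈ Λ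
  sub_notMem : ∀ i j, i ≠ j → d i - d j ∉ Γ
  exists_sub_mem : ∀ x ∈ Λ, ∃ i, x - d i ∈ Γ

namespace IsCosetTransversal

variable {Γ Λ : AddSubgroup G} {d : ι → G}

theorem nonempty (hd : IsCosetTransversal Γ Λ d) : Nonempty ι :=
  let ⟨i, _⟩ := hd.exists_sub_mem 0 Λ.zero_mem
  ⟨i⟩

theorem exists_bijective_add_sub_mem [Finite ι] (hd : IsCosetTransversal Γ Λ d) {g : G}
    (hg : g ∈ Λ) : ∃ f : ι → ι, Bijective f ∧ ∀ i, d i + g - d (f i) ∈ Γ := by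
  choose f hf using fun i ↦ hd.exists_sub_mem _ (Λ.add_mem (hd.mem i) hg)
  refine ⟨f, Finite.injective_iff_bijective.mp fun i j hij ↦ ?_, hf⟩
  by_contra hne
  apply hd.sub_notMem i j hne
  simpa [hij] using Γ.sub_mem (hf i) (hf j)

theorem sum_addChar {R : Type*} [Fintype ι] [CommRing R] [IsDomain R]
    (hd : IsCosetTransversal Γ Λ d) (ψ : AddChar G R) (hψ : ∀ γ ∈ Γ, ψ γ = 1) :
    ∑ i, ψ (d i) = if ∀ g ∈ Λ, ψ g = 1 then (Fintype.card ι : R) else 0 := by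
  split_ifs with hΛ
  · simp [hΛ _ (hd.mem _)]
  push Not at hΛ
  obtain ⟨g, hg, hψg⟩ := hΛ
  obtain ⟨f, hf, hfΓ⟩ := hd.exists_bijective_add_sub_mem hg
  have htranslate : ∀ i, ψ (d (f i)) = ψ g * ψ (d i) := fun i ↦ by
    rw [← one_mul (ψ (d (f i))), ← hψ _ (hfΓ i), ← AddChar.map_add_eq_mul, sub_add_cancel,
      AddChar.map_add_eq_mul, mul_comm]
  have hfixed : ∑ i, ψ (d i) = ψ g * ∑ i, ψ (d i) :=
    calc ∑ i, ψ (d i) = ∑ i, ψ (d (f i)) := (hf.sum_comp fun j ↦ ψ (d j)).symm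
      _ = ψ g * ∑ i, ψ (d i) := by simp_rw [htranslate, Finset.mul_sum]
  have : (ψ g - 1) * ∑ i, ψ (d i) = 0 := by rw [sub_mul, ← hfixed]; ring
  exact (mul_eq_zero.mp this).resolve_left (sub_ne_zero.mpr hψg)

end IsCosetTransversal

end Transversal

section InnerChar

variable {E : Type*} [NormedAddCommGroup E] [InnerProductSpace ℝ E]

noncomputable def innerChar (m : E) : AddChar E ℂ where
  toFun x := Complex.exp (2 * Real.pi * Complex.I * (inner ℝ m x : ℝ))
  map_zero_eq_one' := by simp
  map_add_eq_mul' x y := by rw [inner_add_right, Complex.ofReal_add, mul_add, Complex.exp_add]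

theorem innerChar_apply (m x : E) :
    innerChar m x = Complex.exp (2 * Real.pi * Complex.I * (inner ℝ m x : ℝ)) := rfl

theorem innerChar_eq_one_iff (m x : E) : innerChar m x = 1 ↔ ∃ k : ℤ, inner ℝ m x = k := by
  rw [innerChar_apply, Complex.exp_eq_one_iff]
  refine exists_congr fun k ↦ ?_
  rw [mul_comm _ (inner ℝ m x : ℂ), mul_left_inj' Complex.two_pi_I_ne_zero]
  exact_mod_cast Iff.rfl

theorem norm_innerChar (m x : E) : ‖innerChar m x‖ = 1 := by
  rw [innerChar_apply, ← Complex.ofReal_ofNat, mul_comm, ← mul_assoc, ← Complex.ofReal_mul,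
    ← Complex.ofReal_mul, Complex.norm_exp_ofReal_mul_I]

theorem norm_innerChar_sub_one_le (m x : E) :
    ‖innerChar m x - 1‖ ≤ 2 * Real.pi * ‖m‖ * ‖x‖ := by
  have hexp : innerChar m x = Complex.exp (Complex.I * ↑(2 * Real.pi * inner ℝ m x)) := by
    rw [innerChar_apply]; push_cast; ring_nf
  rw [hexp]
  refine Real.norm_exp_I_mul_ofReal_sub_one_le.trans ?_
  rw [Real.norm_eq_abs, abs_mul, abs_of_pos Real.two_pi_pos, mul_assoc _ ‖m‖]
  gcongr
  exact abs_real_inner_le_norm m x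

theorem norm_innerChar_sub_le (m x y : E) :
    ‖innerChar m x - innerChar m y‖ ≤ 2 * Real.pi * ‖m‖ * ‖x - y‖ := by
  have : innerChar m x - innerChar m y = innerChar m y * (innerChar m (x - y) - 1) := by
    rw [mul_sub, ← AddChar.map_add_eq_mul, add_sub_cancel, mul_one]
  rw [this, norm_mul, norm_innerChar, one_mul]
  exact norm_innerChar_sub_one_le m (x - y)

end InnerChar

theorem mem_dualSet_iff {n : ℕ} {S : Set (EuclideanSpace ℝ (Fin n))}
    {m : EuclideanSpace ℝ (Fin n)} : m ∈ dualSet S ↔ ∀ g ∈ S, innerChar m g = 1 := by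
  simp only [dualSet, Set.mem_ofPred_eq, innerChar_eq_one_iff]

theorem norm_mean_sub_mean_le {𝕜 ι : Type*} [RCLike 𝕜] [Fintype ι] [Nonempty ι] (a b : ι → 𝕜)
    {C : ℝ} (h : ∀ i, ‖a i - b i‖ ≤ C) :
    ‖1 / (Fintype.card ι : 𝕜) * ∑ i, a i - 1 / (Fintype.card ι : 𝕜) * ∑ i, b i‖ ≤ C := by
  have hcard : (0 : ℝ) < Fintype.card ι := Nat.cast_pos.mpr Fintype.card_pos
  rw [← mul_sub, ← Finset.sum_sub_distrib, norm_mul, norm_div, norm_one, RCLike.norm_natCast,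
    div_mul_eq_mul_div, one_mul, div_le_iff₀ hcard, mul_comm]
  simpa using norm_sum_le_of_le Finset.univ fun i _ ↦ h i

theorem stmt1_general {n l : ℕ} (ε : ℝ)
    (Γ Λ : AddSubgroup (EuclideanSpace ℝ (Fin n)))
    (d d' : Fin l → EuclideanSpace ℝ (Fin n))
    -- `d'` is an exact transversal of `Λ/Γ`
    (hmem : ∀ i, d' i ∈ Λ)
    (hdistinct : ∀ i j, i ≠ j → d' i - d' j ∉ Γ)
    (hcover : ∀ x ∈ Λ, ∃ i, x - d' i ∈ Γ)
    -- `d` is `ε`-close to `d'`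
    (happrox : ∀ i, ‖d i - d' i‖ ≤ ε)
    (m : EuclideanSpace ℝ (Fin n)) (hm : m ∈ dualSet (Γ : Set _)) :
    ‖(1 / (l : ℂ)) * ∑ i : Fin l,
        Complex.exp (2 * Real.pi * Complex.I * ((inner ℝ m (d i) : ℝ) : ℂ)) -
        (if m ∈ dualSet (Λ : Set _) then 1 else 0)‖ ≤ 2 * Real.pi * ‖m‖ * ε := by
  have hd' : IsCosetTransversal Γ Λ d' := ⟨hmem, hdistinct, hcover⟩
  have := hd'.nonempty
  have hl : (l : ℂ) ≠ 0 := Nat.cast_ne_zero.mpr (Fin.pos_iff_nonempty.mpr this).ne'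
  have hδ : (if m ∈ dualSet (Λ : Set _) then 1 else 0 : ℂ) =
      1 / l * ∑ i, innerChar m (d' i) := by
    rw [hd'.sum_addChar (innerChar m) (mem_dualSet_iff.mp hm), Fintype.card_fin]
    simp only [mem_dualSet_iff, SetLike.mem_coe]
    split_ifs <;> simp [hl]
  rw [hδ]
  have hmean := norm_mean_sub_mean_le (fun i ↦ innerChar m (d i)) (fun i ↦ innerChar m (d' i))
    (C := 2 * Real.pi * ‖m‖ * ε)
    fun i ↦ (norm_innerChar_sub_le m _ _).trans (by gcongr; exact happrox i)
  rwa [Fintype.card_fin] at hmean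

/-- averaging exponentials over an `ε`-approximate transversal of `Λ/Γ`. -/
theorem stmt1 {n l : ℕ} (hl : 0 < l) (ε : ℝ) (hε : 0 ≤ ε)
    (Γ Λ : AddSubgroup (EuclideanSpace ℝ (Fin n)))
    (hΓ : IsFullLattice Γ) (hΛ : IsFullLattice Λ) (hsub : Γ ≤ Λ)
    (d d' : Fin l → EuclideanSpace ℝ (Fin n))
    -- `d'` is an exact transversal of `Λ/Γ`
    (hmem : ∀ i, d' i ∈ Λ)
    (hdistinct : ∀ i j, i ≠ j → d' i - d' j ∉ Γ)
    (hcover : ∀ x ∈ Λ, ∃ i, x - d' i ∈ Γ)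
    -- `d` is `ε`-close to `d'`
    (happrox : ∀ i, ‖d i - d' i‖ ≤ ε)
    (m : EuclideanSpace ℝ (Fin n)) (hm : m ∈ dualSet (Γ : Set _)) :
    ‖(1 / (l : ℂ)) * ∑ i : Fin l,
        Complex.exp (2 * Real.pi * Complex.I * ((inner ℝ m (d i) : ℝ) : ℂ)) -
        (if m ∈ dualSet (Λ : Set _) then 1 else 0)‖ ≤ 2 * Real.pi * ‖m‖ * ε :=
  stmt1_general ε Γ Λ d d' hmem hdistinct hcover happrox m hm
end

section
/- Let Λ be a full rank lattice in ℝ^n with basis F. For every ε > 0 there exist δ > 0 and ε' > 0 such that Λ* + B(0,ε') ⊆ F^{*,δ} ⊆ Λ* + B(0,ε), where B(0,r) is the open ball of radius r. -/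
def approxDual {n : ℕ} (S : Set (EuclideanSpace ℝ (Fin n))) (ε : ℝ) :
    Set (EuclideanSpace ℝ (Fin n)) :=
  {x | ∀ g ∈ S, ∃ k : ℤ, |(inner ℝ x g : ℝ) - (k : ℝ)| ≤ ε}

/-!
Pairing with the basis, `x ↦ (⟪x, b i⟫)ᵢ`, identifies `Λ*` with `ℤⁿ` and `F^{*,δ}` with the
`δ`-neighbourhood of `ℤⁿ` in the sup norm. Near `Λ*` the pairings move by at most
`‖x - y‖ · ‖b i‖` (Cauchy–Schwarz); conversely, rounding the pairings of `x ∈ F^{*,δ}` to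
integers `kᵢ` gives the point `y = ∑ kᵢ • dᵢ` of `Λ*`, where `d` is the dual basis, and
`‖x - y‖ ≤ δ ∑ ‖dᵢ‖`.
-/

open Module Metric Set
open scoped RealInnerProductSpace

section InnerDualBasis

variable {E : Type*} [NormedAddCommGroup E] [InnerProductSpace ℝ E]
variable {ι : Type*} [DecidableEq ι] [Finite ι]

theorem innerₗ_nondegenerate : (innerₗ E).Nondegenerate :=
  ⟨fun x hx => inner_self_eq_zero.mp (hx x), fun y hy => inner_self_eq_zero.mp (hy y)⟩

noncomputable def Module.Basis.innerDualBasis (b : Basis ι ℝ E) : Basis ι ℝ E :=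
  LinearMap.BilinForm.dualBasis (innerₗ E) innerₗ_nondegenerate b

theorem Module.Basis.inner_innerDualBasis_left (b : Basis ι ℝ E) (i j : ι) :
    ⟪b.innerDualBasis i, b j⟫ = if j = i then 1 else 0 :=
  LinearMap.BilinForm.apply_dualBasis_left innerₗ_nondegenerate b i j

theorem Module.Basis.sum_inner_smul_innerDualBasis [Fintype ι] (b : Basis ι ℝ E) (x : E) :
    ∑ i, ⟪x, b i⟫ • b.innerDualBasis i = x := by
  conv_rhs => rw [← b.innerDualBasis.sum_repr x]
  simp [Basis.innerDualBasis]

end InnerDualBasis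

section Dual

variable {n : ℕ}

theorem dualSet_closure (S : Set (EuclideanSpace ℝ (Fin n))) :
    dualSet (AddSubgroup.closure S : Set (EuclideanSpace ℝ (Fin n))) = dualSet S := by
  refine Subset.antisymm (fun x hx g hg => hx g (AddSubgroup.subset_closure hg)) fun x hx => ?_
  let H := (Int.castAddHom ℝ).range.comap (innerₛₗ ℝ x).toAddMonoidHom
  have hle : AddSubgroup.closure S ≤ H := (AddSubgroup.closure_le H).2 fun g hg => by
    obtain ⟨k, hk⟩ := hx g hg
    exact ⟨k, hk.symm⟩
  intro g hg
  obtain ⟨k, hk⟩ := hle hg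
  exact ⟨k, hk.symm⟩

theorem iUnion_ball_dualSet_subset_approxDual {S : Set (EuclideanSpace ℝ (Fin n))} {R r δ : ℝ}
    (hS : ∀ g ∈ S, ‖g‖ ≤ R) (hδ : r * R ≤ δ) :
    (⋃ y ∈ dualSet S, ball y r) ⊆ approxDual S δ := by
  simp only [subset_def, mem_iUnion, mem_ball, dist_eq_norm]
  rintro x ⟨y, hy, hxy⟩ g hg
  obtain ⟨k, hk⟩ := hy g hg
  refine ⟨k, ?_⟩
  calc |⟪x, g⟫ - k| = |⟪x - y, g⟫| := by rw [inner_sub_left, hk]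
    _ ≤ ‖x - y‖ * ‖g‖ := abs_real_inner_le_norm _ _
    _ ≤ r * R := mul_le_mul hxy.le (hS g hg) (norm_nonneg g) ((norm_nonneg _).trans hxy.le)
    _ ≤ δ := hδ

theorem approxDual_range_subset_iUnion_closedBall {ι : Type*} [Fintype ι] [DecidableEq ι]
    (b : Basis ι ℝ (EuclideanSpace ℝ (Fin n))) (δ : ℝ) :
    approxDual (range b) δ ⊆
      ⋃ y ∈ dualSet (range b), closedBall y (δ * ∑ i, ‖b.innerDualBasis i‖) := by
  intro x hx
  choose k hk using fun i => hx (b i) ⟨i, rfl⟩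
  set y := ∑ i, (k i : ℝ) • b.innerDualBasis i
  have hyb : ∀ j, ⟪y, b j⟫ = k j := fun j => by
    simp [y, sum_inner, real_inner_smul_left, b.inner_innerDualBasis_left]
  have hxy : x - y = ∑ i, (⟪x, b i⟫ - k i) • b.innerDualBasis i := by
    simp only [sub_smul, Finset.sum_sub_distrib, b.sum_inner_smul_innerDualBasis, y]
  simp only [mem_iUnion]
  refine ⟨y, ?_, ?_⟩
  · rintro _ ⟨j, rfl⟩
    exact ⟨k j, hyb j⟩
  · rw [mem_closedBall, dist_eq_norm, hxy, Finset.mul_sum]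
    refine (norm_sum_le _ _).trans (Finset.sum_le_sum fun i _ => ?_)
    rw [norm_smul, Real.norm_eq_abs]
    exact mul_le_mul_of_nonneg_right (hk i) (norm_nonneg _)

end Dual

/-- the `δ`-approximate dual of a basis `F` of a full rank lattice `Λ`
is squeezed between neighbourhoods of the dual lattice `Λ*`. -/
theorem stmt3 {n : ℕ} (Λ : AddSubgroup (EuclideanSpace ℝ (Fin n)))
    (b : Module.Basis (Fin n) ℝ (EuclideanSpace ℝ (Fin n)))
    (hb : Λ = AddSubgroup.closure (Set.range b)) :
    ∀ ε > 0, ∃ δ > 0, ∃ ε' > 0,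
      (⋃ x ∈ dualSet (Λ : Set _), Metric.ball x ε') ⊆ approxDual (Set.range b) δ ∧
      approxDual (Set.range b) δ ⊆ ⋃ x ∈ dualSet (Λ : Set _), Metric.ball x ε := by
  intro ε hε
  set C := ∑ i, ‖b.innerDualBasis i‖
  set R := ∑ i, ‖b i‖
  set δ := ε / (C + 1)
  have hδ : 0 < δ := by positivity
  refine ⟨δ, hδ, δ / (R + 1), by positivity, ?_, ?_⟩ <;> rw [hb, dualSet_closure]
  · refine iUnion_ball_dualSet_subset_approxDual (R := R + 1) ?_
      (div_mul_cancel₀ δ (by positivity)).le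
    rintro _ ⟨i, rfl⟩
    exact (Finset.single_le_sum (fun j _ => norm_nonneg (b j)) (Finset.mem_univ i)).trans
      (le_add_of_nonneg_right zero_le_one)
  · refine (approxDual_range_subset_iUnion_closedBall b δ).trans
      (iUnion₂_mono fun y _ => closedBall_subset_ball ?_)
    calc δ * C < δ * (C + 1) := by gcongr; linarith
      _ = ε := div_mul_cancel₀ ε (by positivity)
end

section
/- Let Γ and Λ be two lattices (discrete subgroups) in ℝ^n. Then the dual of their intersection satisfies (Γ ∩ Λ)* = closure(Γ* + Λ*), where the closure is taken in ℝ^n. -/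
/-- A lattice: a discrete additive subgroup of `ℝⁿ`. -/
def IsDiscreteSubgroup {n : ℕ} (L : AddSubgroup (EuclideanSpace ℝ (Fin n))) : Prop :=
  ∃ ε > 0, ∀ x ∈ L, x ≠ 0 → ε ≤ ‖x‖

/-!
A closed subgroup `H` of a finite-dimensional real vector space contains a largest linear
subspace `V`, and for any complement `W` of `V` the subgroup `H ∩ W` is discrete: a sequence of
small nonzero elements of `H ∩ W` would, after normalisation, converge to a unit vector `u` with
`ℝ u ⊆ H ∩ W`. A discrete subgroup is a lattice in its real span, so any point outside it has a
non-integral coordinate in a lattice basis; that coordinate, extended to the whole space and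
precomposed with the projection onto `W` along `V`, is integral on `H` but not at the given
point. By Riesz representation this gives `H** = H` for closed `H`.

For the theorem, `Γ* + Λ* ⊆ (Γ ∩ Λ)*` and the latter is closed. Conversely, writing
`A = closure (Γ* + Λ*)`, we have `A* ⊆ Γ** ∩ Λ** = Γ ∩ Λ`, hence `(Γ ∩ Λ)* ⊆ A** = A`.
-/

open Filter Topology Submodule

namespace AddSubgroup

variable {E : Type*} [NormedAddCommGroup E] [NormedSpace ℝ E]

def linearPart (H : AddSubgroup E) : Submodule ℝ E where
  carrier := {x | ∀ t : ℝ, t • x ∈ H}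
  zero_mem' t := by simp
  add_mem' ha hb t := by simpa [smul_add] using H.add_mem (ha t) (hb t)
  smul_mem' c x hx t := by simpa [smul_smul] using hx (t * c)

theorem linearPart_le (H : AddSubgroup E) : H.linearPart.toAddSubgroup ≤ H := fun x hx => by
  simpa using hx 1

theorem linearPart_inf (H : AddSubgroup E) (W : Submodule ℝ E) :
    (H ⊓ W.toAddSubgroup).linearPart = H.linearPart ⊓ W := by
  ext x
  refine ⟨fun hx => ⟨fun t => (hx t).1, by simpa using (hx 1).2⟩,
    fun hx t => ⟨hx.1 t, W.smul_mem t hx.2⟩⟩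

theorem mem_linearPart_of_tendsto {H : AddSubgroup E} (hH : IsClosed (H : Set E)) {ι : Type*}
    {l : Filter ι} [l.NeBot] {x : ι → E} {u : E} (hxH : ∀ i, x i ∈ H)
    (hx : Tendsto x l (𝓝 0)) (hu : Tendsto (fun i => ‖x i‖⁻¹ • x i) l (𝓝 u)) :
    u ∈ H.linearPart := by
  intro t
  -- `⌊t / ‖x i‖⌋ • x i ∈ H` differs from `t • (‖x i‖⁻¹ • x i)` by at most `‖x i‖`.
  have hfloor : ∀ i, (⌊t / ‖x i‖⌋ • x i) =
      t • (‖x i‖⁻¹ • x i) - Int.fract (t / ‖x i‖) • x i := fun i => by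
    rw [Int.fract, sub_smul, ← Int.cast_smul_eq_zsmul ℝ, smul_smul, div_eq_mul_inv]
    abel
  have hfract : Tendsto (fun i => Int.fract (t / ‖x i‖) • x i) l (𝓝 0) := by
    refine squeeze_zero_norm (fun i => ?_) (tendsto_zero_iff_norm_tendsto_zero.mp hx)
    rw [norm_smul, Real.norm_of_nonneg (Int.fract_nonneg _)]
    exact mul_le_of_le_one_left (norm_nonneg _) (Int.fract_lt_one _).le
  have hlim : Tendsto (fun i => ⌊t / ‖x i‖⌋ • x i) l (𝓝 (t • u)) := by
    simp_rw [hfloor]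
    simpa using (hu.const_smul t).sub hfract
  exact hH.mem_of_tendsto hlim (.of_forall fun i => H.zsmul_mem (hxH i) _)

theorem discreteTopology_of_linearPart_eq_bot [FiniteDimensional ℝ E] {H : AddSubgroup E}
    (hH : IsClosed (H : Set E)) (h : H.linearPart = ⊥) : DiscreteTopology H := by
  by_contra hdisc
  have exists_small : ∀ ε > 0, ∃ x ∈ H, x ≠ 0 ∧ ‖x‖ < ε := by
    by_contra! h'
    obtain ⟨ε, hε, hle⟩ := h'
    exact hdisc (.of_forall_le_norm hε fun x hx => hle x x.2 (by simpa using hx))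
  choose x hxH hx0 hxε using fun m : ℕ => exists_small (1 / (m + 1)) Nat.one_div_pos_of_nat
  have hx : Tendsto x atTop (𝓝 0) :=
    squeeze_zero_norm (fun m => (hxε m).le) tendsto_one_div_add_atTop_nhds_zero_nat
  obtain ⟨u, hu, φ, hφ, hlim⟩ := (isCompact_sphere (0 : E) 1).tendsto_subseq
    (x := fun m => ‖x m‖⁻¹ • x m) fun m => by simp [norm_smul, hx0 m]
  have hu_lin : u ∈ H.linearPart :=
    mem_linearPart_of_tendsto hH (fun j => hxH (φ j)) (hx.comp hφ.tendsto_atTop) hlim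
  rw [h, Submodule.mem_bot] at hu_lin
  simp [hu_lin] at hu

end AddSubgroup

section LatticeSeparation

variable {E : Type*} [NormedAddCommGroup E] [NormedSpace ℝ E] [FiniteDimensional ℝ E]

theorem IsZLattice.exists_dual_separating (L : Submodule ℤ E) [DiscreteTopology L]
    [IsZLattice ℝ L] {w : E} (hw : w ∉ L) :
    ∃ f : E →ₗ[ℝ] ℝ, (∀ l ∈ L, ∃ k : ℤ, f l = k) ∧ ¬ ∃ k : ℤ, f w = k := by
  let b := Module.Free.chooseBasis ℤ L
  obtain ⟨i, hi⟩ : ∃ i, ¬ ∃ k : ℤ, (b.ofZLatticeBasis ℝ L).repr w i = k := by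
    by_contra! h
    refine hw ?_
    rw [← b.ofZLatticeBasis_span ℝ, Module.Basis.mem_span_iff_repr_mem]
    intro i
    obtain ⟨k, hk⟩ := h i
    exact ⟨k, by simp [hk]⟩
  refine ⟨(b.ofZLatticeBasis ℝ L).coord i, fun l hl => ⟨b.repr ⟨l, hl⟩ i, ?_⟩, hi⟩
  exact b.ofZLatticeBasis_repr_apply ℝ L ⟨l, hl⟩ i

theorem Submodule.exists_dual_separating_of_discrete (L : Submodule ℤ E) [DiscreteTopology L]
    {w : E} (hw : w ∉ L) :
    ∃ f : E →ₗ[ℝ] ℝ, (∀ l ∈ L, ∃ k : ℤ, f l = k) ∧ ¬ ∃ k : ℤ, f w = k := by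
  set S := span ℝ (L : Set E)
  by_cases hwS : w ∈ S
  · let L₀ := ZLattice.comap ℝ L S.subtype
    have : DiscreteTopology L₀ := ZLattice.comap_discreteTopology ℝ L
      (LinearMap.continuous_of_finiteDimensional _) (injective_subtype S)
    have : IsZLattice ℝ L₀ := ⟨span_span_coe_preimage⟩
    obtain ⟨f₀, hf₀L, hf₀w⟩ := IsZLattice.exists_dual_separating L₀ (w := ⟨w, hwS⟩) hw
    obtain ⟨f, rfl⟩ := LinearMap.exists_extend f₀
    exact ⟨f, fun l hl => hf₀L ⟨l, subset_span hl⟩ hl, hf₀w⟩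
  · obtain ⟨f, hf0, hfw⟩ := LinearMap.exists_extend_of_notMem (0 : S →ₗ[ℝ] ℝ) hwS (1 / 2)
    refine ⟨f, fun l hl => ⟨0, by simpa using LinearMap.congr_fun hf0 ⟨l, subset_span hl⟩⟩, ?_⟩
    rintro ⟨k, hk⟩
    have : ((2 * k : ℤ) : ℝ) = 1 := by push_cast; linarith
    have : 2 * k = 1 := by exact_mod_cast this
    omega

theorem AddSubgroup.exists_dual_separating_of_isClosed {H : AddSubgroup E}
    (hH : IsClosed (H : Set E)) {x : E} (hx : x ∉ H) :
    ∃ f : E →ₗ[ℝ] ℝ, (∀ h ∈ H, ∃ k : ℤ, f h = k) ∧ ¬ ∃ k : ℤ, f x = k := by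
  obtain ⟨W, hW⟩ := H.linearPart.exists_isCompl
  set P := W.projection H.linearPart hW.symm
  have hP : ∀ z, z - P z ∈ H := fun z => H.linearPart_le (sub_projection_mem hW.symm z)
  set D := H ⊓ W.toAddSubgroup
  have : DiscreteTopology D.toIntSubmodule := AddSubgroup.discreteTopology_of_linearPart_eq_bot
    (hH.inter W.closed_of_finiteDimensional) (by rw [H.linearPart_inf, hW.inf_eq_bot])
  have hPD : ∀ z ∈ H, P z ∈ D := fun z hz =>
    ⟨by simpa using H.sub_mem hz (hP z), projection_apply_mem _ z⟩
  have hPx : P x ∉ D.toIntSubmodule := fun h => hx (by simpa using H.add_mem h.1 (hP x))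
  obtain ⟨f, hfD, hfx⟩ := D.toIntSubmodule.exists_dual_separating_of_discrete hPx
  exact ⟨f ∘ₗ P, fun h hh => hfD _ (hPD h hh), hfx⟩

end LatticeSeparation

section EuclideanDual

variable {n : ℕ}

def dualAddSubgroup (S : Set (EuclideanSpace ℝ (Fin n))) :
    AddSubgroup (EuclideanSpace ℝ (Fin n)) where
  carrier := dualSet S
  zero_mem' _ _ := ⟨0, by simp⟩
  add_mem' {a b} ha hb g hg := by
    obtain ⟨k, hk⟩ := ha g hg
    obtain ⟨m, hm⟩ := hb g hg
    exact ⟨k + m, by rw [inner_add_left, hk, hm, Int.cast_add]⟩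
  neg_mem' {a} ha g hg := by
    obtain ⟨k, hk⟩ := ha g hg
    exact ⟨-k, by rw [inner_neg_left, hk, Int.cast_neg]⟩

@[simp]
theorem mem_dualAddSubgroup {S : Set (EuclideanSpace ℝ (Fin n))} {x : EuclideanSpace ℝ (Fin n)} :
    x ∈ dualAddSubgroup S ↔ x ∈ dualSet S := Iff.rfl

theorem dualSet_anti {S T : Set (EuclideanSpace ℝ (Fin n))} (h : S ⊆ T) :
    dualSet T ⊆ dualSet S := fun _ hx g hg => hx g (h hg)

theorem isClosed_dualSet (S : Set (EuclideanSpace ℝ (Fin n))) : IsClosed (dualSet S) := by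
  have : dualSet S = ⋂ g ∈ S, (fun x => inner ℝ x g) ⁻¹' Set.range ((↑) : ℤ → ℝ) := by
    ext x
    simp [dualSet, eq_comm]
  rw [this]
  exact isClosed_biInter fun g _ =>
    Int.isClosedEmbedding_coe_real.isClosed_range.preimage (by fun_prop)

theorem mem_of_mem_dualSet_dualSet {H : AddSubgroup (EuclideanSpace ℝ (Fin n))}
    (hH : IsClosed (H : Set (EuclideanSpace ℝ (Fin n)))) {x : EuclideanSpace ℝ (Fin n)}
    (hx : x ∈ dualSet (dualSet H)) : x ∈ H := by
  by_contra hxH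
  obtain ⟨f, hfH, hfx⟩ := H.exists_dual_separating_of_isClosed hH hxH
  set y := (InnerProductSpace.toDual ℝ _).symm (LinearMap.toContinuousLinearMap f)
  have hy : ∀ z, inner ℝ y z = f z := fun z => InnerProductSpace.toDual_symm_apply
  obtain ⟨k, hk⟩ := hx y fun h hh => by simpa only [hy] using hfH h hh
  exact hfx ⟨k, by rw [← hy, real_inner_comm, hk]⟩

theorem IsDiscreteSubgroup.isClosed {L : AddSubgroup (EuclideanSpace ℝ (Fin n))}
    (hL : IsDiscreteSubgroup L) : IsClosed (L : Set (EuclideanSpace ℝ (Fin n))) := by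
  obtain ⟨ε, hε, hle⟩ := hL
  have : DiscreteTopology L := .of_forall_le_norm hε fun x hx => hle x x.2 (by simpa using hx)
  exact AddSubgroup.isClosed_of_discrete

end EuclideanDual

/-- duality identity `(Γ ∩ Λ)* = closure(Γ* + Λ*)` for lattices. -/
theorem stmt8 {n : ℕ} (Γ Λ : AddSubgroup (EuclideanSpace ℝ (Fin n)))
    (hΓ : IsDiscreteSubgroup Γ) (hΛ : IsDiscreteSubgroup Λ) :
    dualSet ((Γ : Set (EuclideanSpace ℝ (Fin n))) ∩ (Λ : Set (EuclideanSpace ℝ (Fin n)))) =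
      closure {z | ∃ a ∈ dualSet (Γ : Set (EuclideanSpace ℝ (Fin n))), ∃ b ∈ dualSet (Λ : Set (EuclideanSpace ℝ (Fin n))), z = a + b} := by
  set A := dualAddSubgroup (Γ : Set (EuclideanSpace ℝ (Fin n))) ⊔ dualAddSubgroup Λ
  have hA : {z | ∃ a ∈ dualSet (Γ : Set (EuclideanSpace ℝ (Fin n))),
      ∃ b ∈ dualSet (Λ : Set (EuclideanSpace ℝ (Fin n))), z = a + b} = A := by
    ext z
    simp [A, AddSubgroup.mem_sup, eq_comm]
  rw [hA, ← A.topologicalClosure_coe]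
  refine subset_antisymm (fun x hx => ?_) ?_
  · refine mem_of_mem_dualSet_dualSet A.isClosed_topologicalClosure fun g hg => hx g ⟨?_, ?_⟩
    · have : dualAddSubgroup Γ ≤ A.topologicalClosure := le_sup_left.trans A.le_topologicalClosure
      exact mem_of_mem_dualSet_dualSet hΓ.isClosed (dualSet_anti this hg)
    · have : dualAddSubgroup Λ ≤ A.topologicalClosure := le_sup_right.trans A.le_topologicalClosure
      exact mem_of_mem_dualSet_dualSet hΛ.isClosed (dualSet_anti this hg)
  · refine A.topologicalClosure_minimal (t := dualAddSubgroup (Γ ∩ Λ)) (sup_le ?_ ?_)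
      (isClosed_dualSet _)
    · exact dualSet_anti Set.inter_subset_left
    · exact dualSet_anti Set.inter_subset_right
end

section
/- Let a = p/q ∈ ℚ with p, q ∈ ℕ relatively prime, and let λ ∈ ℕ. Then the condition (Σ_{j∈ℤ} (p/q)^j λℤ) ∩ ℤ ⊆ λℤ holds if and only if λ is relatively prime to both p and q. (Equivalently, lcm(λ, (pq)^J) ∈ λ(pq)^J ℤ for all J ∈ ℕ iff gcd(λ, pq) = 1.) -/
/-!
If `λ` is prime to `pq`, every element of `Σ_j (p/q)^j λℤ` becomes a multiple of `λ` after
multiplication by a large power of `pq`; for an integer `k` this forces `λ ∣ k`.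
Conversely, if `d = gcd(λ, q) > 1` then `(p/q) · λ · (q/d) = p · (λ/d)` is an integer in the
sum which is a multiple of `λ` only if `d ∣ p`, contradicting `gcd(p, q) = 1`; symmetrically
for `gcd(λ, p)`, using `(p/q)⁻¹`.
-/

namespace AddSubgroup

variable {G : Type*} [AddCommGroup G]

def powSaturation (H : AddSubgroup G) (N : ℕ) : AddSubgroup G where
  carrier := {x | ∃ J : ℕ, N ^ J • x ∈ H}
  zero_mem' := ⟨0, by simp⟩
  add_mem' := by
    rintro x y ⟨J₁, hx⟩ ⟨J₂, hy⟩
    refine ⟨J₁ + J₂, ?_⟩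
    have e : N ^ (J₁ + J₂) • (x + y) = N ^ J₂ • (N ^ J₁ • x) + N ^ J₁ • (N ^ J₂ • y) := by
      rw [smul_smul, smul_smul, ← pow_add, ← pow_add, add_comm J₂, smul_add]
    exact e ▸ H.add_mem (H.nsmul_mem hx _) (H.nsmul_mem hy _)
  neg_mem' := by
    rintro x ⟨J, hx⟩
    exact ⟨J, by rw [smul_neg]; exact H.neg_mem hx⟩

end AddSubgroup

theorem exists_natCast_eq_mul_pow_mul_zpow_div {K : Type*} [Field K] {p q : ℕ}
    (hp : (p : K) ≠ 0) (hq : (q : K) ≠ 0) (j : ℤ) :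
    ∃ n : ℕ, ((p * q : ℕ) : K) ^ j.natAbs * ((p : K) / q) ^ j = n := by
  obtain ⟨k, rfl | rfl⟩ := Int.eq_nat_or_neg j
  · refine ⟨p ^ (2 * k), ?_⟩
    rw [Int.natAbs_natCast, zpow_natCast, ← mul_pow, pow_mul]
    push_cast
    congr 1
    field_simp
  · refine ⟨q ^ (2 * k), ?_⟩
    rw [Int.natAbs_neg, Int.natAbs_natCast, zpow_neg, zpow_natCast, ← inv_pow, ← mul_pow,
      pow_mul]
    push_cast
    congr 1
    field_simp

theorem Int.dvd_of_cast_eq_mul {R : Type*} [Ring R] [CharZero R] {k lam m : ℤ}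
    (h : (k : R) = lam * m) : lam ∣ k :=
  ⟨m, by exact_mod_cast h⟩

theorem Nat.coprime_of_forall_div_mul_intCast {lam u v : ℕ} (hlam : 0 < lam) (hv : 0 < v)
    (huv : Nat.Coprime u v)
    (h : ∀ m k : ℤ, (u / v : ℝ) * lam * m = k → ∃ m' : ℤ, (k : ℝ) = lam * m') :
    Nat.Coprime lam v := by
  set d := lam.gcd v
  obtain ⟨a, hlam_eq⟩ := Nat.gcd_dvd_left lam v
  obtain ⟨b, hv_eq⟩ := Nat.gcd_dvd_right lam v
  have ha : 0 < a := Nat.pos_of_mul_pos_left (hlam_eq ▸ hlam)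
  have hd : (d : ℝ) ≠ 0 := by exact_mod_cast (Nat.gcd_pos_of_pos_right lam hv).ne'
  have hb : (b : ℝ) ≠ 0 := by exact_mod_cast (Nat.pos_of_mul_pos_left (hv_eq ▸ hv)).ne'
  have hint : (u / v : ℝ) * lam * (b : ℤ) = ((u * a : ℕ) : ℤ) := by
    rw [show (lam : ℝ) = d * a by exact_mod_cast hlam_eq,
      show (v : ℝ) = d * b by exact_mod_cast hv_eq]
    push_cast
    field_simp
  obtain ⟨m', hm'⟩ := h b _ hint
  have hdvd : d * a ∣ u * a := by
    rw [← hlam_eq]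
    exact Int.natCast_dvd_natCast.mp (Int.dvd_of_cast_eq_mul (R := ℝ) hm')
  have hdu : d ∣ u := Nat.dvd_of_mul_dvd_mul_right ha hdvd
  exact Nat.eq_one_of_dvd_one (huv ▸ Nat.dvd_gcd hdu (Nat.gcd_dvd_right lam v))

theorem closure_zpow_div_mul_le_powSaturation {p q : ℕ} (hp : 0 < p) (hq : 0 < q) (lam : ℝ) :
    AddSubgroup.closure {x : ℝ | ∃ j : ℤ, ∃ m : ℤ, x = ((p : ℝ) / (q : ℝ)) ^ j * lam * (m : ℝ)} ≤
      (AddSubgroup.zmultiples lam).powSaturation (p * q) := by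
  rw [AddSubgroup.closure_le]
  rintro _ ⟨j, m, rfl⟩
  obtain ⟨n, hn⟩ := exists_natCast_eq_mul_pow_mul_zpow_div (K := ℝ) (p := p) (q := q)
    (by positivity) (by positivity) j
  refine ⟨j.natAbs, AddSubgroup.mem_zmultiples_iff.mpr ⟨n * m, ?_⟩⟩
  rw [nsmul_eq_mul, zsmul_eq_mul, ← mul_assoc, ← mul_assoc, Nat.cast_pow, hn]
  push_cast
  ring

theorem Int.dvd_of_cast_mem_powSaturation_zmultiples {R : Type*} [Ring R] [CharZero R]
    {lam k : ℤ} {N : ℕ} (hcop : IsCoprime lam N)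
    (h : (k : R) ∈ (AddSubgroup.zmultiples (lam : R)).powSaturation N) : lam ∣ k := by
  obtain ⟨J, hJ⟩ := h
  obtain ⟨m, hm⟩ := AddSubgroup.mem_zmultiples_iff.mp hJ
  rw [zsmul_eq_mul, nsmul_eq_mul, Nat.cast_pow] at hm
  have hdvd : lam ∣ (N : ℤ) ^ J * k := Int.dvd_of_cast_eq_mul (R := R) (m := m) <| by
    push_cast
    rw [← hm, Int.cast_comm]
  exact (hcop.pow_right (n := J)).dvd_of_dvd_mul_left hdvd

/-- for `a = p/q` with `gcd(p,q) = 1` and `λ ∈ ℕ`, the oversampling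
condition `(Σ_{j∈ℤ} (p/q)^j λℤ) ∩ ℤ ⊆ λℤ` holds iff `λ` is relatively prime
to both `p` and `q`. -/
theorem stmt14 (p q lam : ℕ) (hp : 0 < p) (hq : 0 < q) (hpq : Nat.Coprime p q)
    (hlam : 0 < lam) :
    (((AddSubgroup.closure
          {x : ℝ | ∃ j : ℤ, ∃ m : ℤ, x = ((p : ℝ) / (q : ℝ)) ^ j * (lam : ℝ) * (m : ℝ)} :
        AddSubgroup ℝ) : Set ℝ) ∩ {x : ℝ | ∃ k : ℤ, x = (k : ℝ)} ⊆
        {x : ℝ | ∃ m : ℤ, x = (lam : ℝ) * (m : ℝ)}) ↔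
      Nat.Coprime lam p ∧ Nat.Coprime lam q := by
  constructor
  · intro h
    have hmul (j m k : ℤ) (hk : ((p : ℝ) / q) ^ j * lam * m = k) :
        ∃ m' : ℤ, (k : ℝ) = lam * m' := by
      obtain ⟨m', hm'⟩ := h ⟨AddSubgroup.subset_closure ⟨j, m, rfl⟩, k, hk⟩
      exact ⟨m', hk ▸ hm'⟩
    refine ⟨Nat.coprime_of_forall_div_mul_intCast hlam hp hpq.symm fun m k hk => ?_,
      Nat.coprime_of_forall_div_mul_intCast hlam hq hpq fun m k hk => hmul 1 m k (by simpa)⟩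
    exact hmul (-1) m k (by simpa using hk)
  · rintro ⟨hlp, hlq⟩ x ⟨hx, k, rfl⟩
    have hcop : IsCoprime (lam : ℤ) ((p * q : ℕ) : ℤ) :=
      Nat.isCoprime_iff_coprime.mpr (hlp.mul_right hlq)
    have hk : (k : ℝ) ∈ (AddSubgroup.zmultiples ((lam : ℤ) : ℝ)).powSaturation (p * q) := by
      rw [Int.cast_natCast]
      exact closure_zpow_div_mul_le_powSaturation hp hq _ hx
    obtain ⟨m, rfl⟩ := Int.dvd_of_cast_mem_powSaturation_zmultiples hcop hk
    exact ⟨m, by push_cast; ring⟩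
end

section
/- Let p, q be relatively prime natural numbers and J ∈ ℕ. Then the subgroup of ℝ generated by the numbers (p/q)^j for |j| ≤ J equals (1/(pq)^J)·ℤ. -/
/-!
Each generator `(p/q)^j = p^(J+j) q^(J-j) / (pq)^J` is an integer multiple of `1/(pq)^J`.
Conversely, Bézout for the coprime integers `p^(2J)` and `q^(2J)` gives
`u p^(2J) + v q^(2J) = 1`, that is `u (p/q)^J + v (p/q)^(-J) = 1/(pq)^J`.
-/

open AddSubgroup

section
variable {K : Type*} [Field K] {p q : ℤ}

lemma div_zpow_sub_eq_zsmul_inv_pow (hp : (p : K) ≠ 0) (hq : (q : K) ≠ 0) {a b J : ℕ}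
    (hab : a + b = 2 * J) :
    ((p : K) / q) ^ ((a : ℤ) - J) = (p ^ a * q ^ b) • (((p : K) * q) ^ J)⁻¹ := by
  rw [zpow_sub₀ (div_ne_zero hp hq), zpow_natCast, zpow_natCast, div_pow, div_pow, zsmul_eq_mul,
    mul_pow]
  push_cast
  field_simp
  rw [← pow_mul, ← pow_add, hab, mul_comm]

lemma zpow_div_mem_zmultiples (hp : (p : K) ≠ 0) (hq : (q : K) ≠ 0) {J : ℕ} {j : ℤ}
    (hj : |j| ≤ J) : ((p : K) / q) ^ j ∈ zmultiples (((p : K) * q) ^ J)⁻¹ := by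
  obtain ⟨hjl, hju⟩ := abs_le.mp hj
  obtain ⟨a, rfl⟩ : ∃ a : ℕ, j = a - J := ⟨(j + J).toNat, by omega⟩
  rw [div_zpow_sub_eq_zsmul_inv_pow hp hq (b := 2 * J - a) (by omega)]
  exact zsmul_mem (mem_zmultiples _) _

lemma inv_mul_pow_mem_closure (hp : (p : K) ≠ 0) (hq : (q : K) ≠ 0) (hpq : IsCoprime p q)
    (J : ℕ) : (((p : K) * q) ^ J)⁻¹ ∈
      closure {x : K | ∃ j : ℤ, |j| ≤ J ∧ x = ((p : K) / q) ^ j} := by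
  set S := {x : K | ∃ j : ℤ, |j| ≤ J ∧ x = ((p : K) / q) ^ j}
  obtain ⟨u, v, huv⟩ := hpq.pow (m := 2 * J) (n := 2 * J)
  have huvK : (u : K) * p ^ (2 * J) + v * q ^ (2 * J) = 1 := by
    exact_mod_cast congrArg (Int.cast : ℤ → K) huv
  have hmem : u • ((p : K) / q) ^ (J : ℤ) + v • ((p : K) / q) ^ (-(J : ℤ)) ∈ closure S :=
    add_mem (zsmul_mem (subset_closure (show _ ∈ S from ⟨J, by simp, rfl⟩)) u)
      (zsmul_mem (subset_closure (show _ ∈ S from ⟨-J, by simp, rfl⟩)) v)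
  convert hmem using 1
  rw [zsmul_eq_mul, zsmul_eq_mul, zpow_neg, zpow_natCast, div_pow, inv_div, mul_pow]
  field_simp
  linear_combination -huvK

theorem closure_zpow_div_eq_zmultiples (hp : (p : K) ≠ 0) (hq : (q : K) ≠ 0)
    (hpq : IsCoprime p q) (J : ℕ) :
    closure {x : K | ∃ j : ℤ, |j| ≤ J ∧ x = ((p : K) / q) ^ j} =
      zmultiples (((p : K) * q) ^ J)⁻¹ :=
  le_antisymm (closure_le _ |>.mpr fun _ ⟨_, hj, hx⟩ => hx ▸ zpow_div_mem_zmultiples hp hq hj)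
    (zmultiples_le.mpr (inv_mul_pow_mem_closure hp hq hpq J))

end

/-- for coprime `p, q` and `J ∈ ℕ`, the subgroup of `ℝ` generated by
the numbers `(p/q)^j`, `|j| ≤ J`, equals `(1/(pq)^J) ℤ`. -/
theorem stmt15 (p q : ℕ) (hp : 0 < p) (hq : 0 < q) (hpq : Nat.Coprime p q) (J : ℕ) :
    ((AddSubgroup.closure
        {x : ℝ | ∃ j : ℤ, |j| ≤ (J : ℤ) ∧ x = ((p : ℝ) / (q : ℝ)) ^ j} :
      AddSubgroup ℝ) : Set ℝ) =
    {x : ℝ | ∃ m : ℤ, x = (m : ℝ) / ((p * q : ℕ) ^ J : ℝ)} := by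
  have h := closure_zpow_div_eq_zmultiples (K := ℝ) (p := p) (q := q) (by simpa using hp.ne')
    (by simpa using hq.ne') (Nat.isCoprime_iff_coprime.mpr hpq) J
  simp only [Int.cast_natCast] at h
  ext x
  rw [h]
  simp [mem_zmultiples_iff, div_eq_mul_inv, eq_comm]
end

section
/- Suppose Γ_i ⊂ Λ_i, i = 1,…,J, are full rank lattices in ℝ^n and Δ is a full rank lattice with Δ ⊆ ∩_{i=1}^J Λ_i and Λ_i ⊆ Δ + Γ_i for each i. Then there exists a finite multiset K ⊂ Δ such that for every i and every γ ∈ Λ_i, the proportion |K ∩ (γ + Γ_i)|/|K| = 1/l_i, where l_i = |Λ_i/Γ_i|; i.e., K contains an equal number of points from each coset of Λ_i/Γ_i, simultaneously for all i. (One may take K = D^1 + ⋯ + D^J as a multiset sum, where D^i ⊂ Δ is a transversal of Λ_i/Γ_i.) -/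
/-!
Since `Λᵢ ⊆ Δ + Γᵢ`, each transversal of `Λᵢ/Γᵢ` can be moved into `Δ` coset by coset; let `K` be
the multiset sum of these transversals `Dʲ ⊆ Δ`. Fix all summands of a point of `K` except the
`i`-th: they lie in `Δ ⊆ Λᵢ`, so exactly one choice of the `i`-th summand puts the sum in a given
coset `γ + Γᵢ`. Hence every coset of `Λᵢ/Γᵢ` contains exactly `|K| / lᵢ` points of `K`.
-/

open Classical

open Finset

section Counting

variable {ι : Type*} [Fintype ι] [DecidableEq ι] {α : ι → Type*}

theorem Fintype.card_filter_mul_card_eq_card_pi [∀ j, Fintype (α j)] (i : ι)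
    (p : (∀ j, α j) → Prop) [DecidablePred p]
    (hp : ∀ y, ∃! x, p ((Equiv.piSplitAt i α).symm (x, y))) :
    #{a | p a} * Fintype.card (α i) = Fintype.card (∀ j, α j) := by
  have hfiber : #{a | p a} = Fintype.card (∀ j : {j // j ≠ i}, α j) := by
    rw [card_filter, ← (Equiv.piSplitAt i α).symm.sum_comp, Fintype.sum_prod_type_right,
      Fintype.card_eq_sum_ones]
    refine Fintype.sum_congr _ _ fun y => ?_
    rw [← card_filter, ← Fintype.existsUnique_iff_card_one]
    exact hp y
  rw [hfiber, Fintype.card_congr (Equiv.piSplitAt i α), Fintype.card_prod, mul_comm]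

theorem Equiv.sum_piSplitAt_symm {M : Type*} [AddCommMonoid M] (f : ∀ j, α j → M) (i : ι)
    (x : α i) (y : ∀ j : {j // j ≠ i}, α j) :
    ∑ j, f j ((Equiv.piSplitAt i α).symm (x, y) j) = f i x + ∑ j : {j // j ≠ i}, f j (y j) := by
  rw [← add_sum_erase univ _ (mem_univ i), sum_subtype (univ.erase i) (p := (· ≠ i)) (by simp)]
  congr 1
  · simp
  · exact sum_congr rfl fun j _ => by simp [j.2]

end Counting

section Transversal

variable {G : Type*} [AddCommGroup G] {H L : AddSubgroup G} {β : Type*}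

theorem existsUnique_sub_mem_of_sub_mem_transversal {t d : β → G}
    (hdist : ∀ a b, a ≠ b → t a - t b ∉ H) (hcover : ∀ x ∈ L, ∃ a, x - t a ∈ H)
    (hdt : ∀ a, d a - t a ∈ H) {c : G} (hc : c ∈ L) : ∃! a, d a - c ∈ H := by
  have key : ∀ a, d a - c ∈ H ↔ c - t a ∈ H := fun a => by
    rw [H.sub_mem_comm_iff, ← H.add_mem_cancel_left (hdt a), add_comm, sub_add_sub_cancel]
  simp only [key]
  obtain ⟨a, ha⟩ := hcover c hc
  refine ⟨a, ha, fun b hb => ?_⟩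
  by_contra hba
  exact hdist b a hba (by simpa using H.sub_mem ha hb)

end Transversal

section MinkowskiSum

variable {G : Type*} {ι : Type*} [Fintype ι] [DecidableEq ι] {α : ι → Type*}
  [∀ j, Fintype (α j)]

/-- The multiset sum `D¹ + ⋯ + Dᴶ`, with `Dʲ` the image of `d j` counted with multiplicity. -/
def minkowskiSum [AddCommMonoid G] (d : ∀ j, α j → G) : Multiset G :=
  (univ : Finset (∀ j, α j)).val.map fun a => ∑ j, d j (a j)

theorem minkowskiSum_ne_zero [AddCommMonoid G] [∀ j, Nonempty (α j)] (d : ∀ j, α j → G) :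
    minkowskiSum d ≠ 0 := by
  simpa [minkowskiSum] using univ_nonempty.ne_empty

theorem mem_of_mem_minkowskiSum [AddCommMonoid G] {S : AddSubmonoid G} {d : ∀ j, α j → G}
    (hd : ∀ j a, d j a ∈ S) {x : G} (hx : x ∈ minkowskiSum d) : x ∈ S := by
  obtain ⟨a, -, rfl⟩ := Multiset.mem_map.mp hx
  exact S.sum_mem fun j _ => hd j (a j)

theorem countP_minkowskiSum_mul_card [AddCommGroup G] {H L : AddSubgroup G}
    {d : ∀ j, α j → G} (hdL : ∀ j a, d j a ∈ L) (i : ι) (hdi : ∀ c ∈ L, ∃! x, d i x - c ∈ H)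
    {γ : G} (hγ : γ ∈ L) :
    (minkowskiSum d).countP (· - γ ∈ H) * Fintype.card (α i) =
      Multiset.card (minkowskiSum d) := by
  rw [minkowskiSum, Multiset.countP_map, Multiset.card_map, ← filter_val, card_val, card_val,
    card_univ]
  refine Fintype.card_filter_mul_card_eq_card_pi i _ fun y => ?_
  have hrest : γ - ∑ j : {j // j ≠ i}, d j (y j) ∈ L :=
    L.sub_mem hγ (L.sum_mem fun j _ => hdL j (y j))
  simpa only [Equiv.sum_piSplitAt_symm, add_sub_assoc', sub_sub_eq_add_sub, sub_add_eq_add_sub]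
    using hdi _ hrest

end MinkowskiSum

theorem stmt17_general {n J : ℕ} (Γ Λ : Fin J → AddSubgroup (EuclideanSpace ℝ (Fin n)))
    (Δ : AddSubgroup (EuclideanSpace ℝ (Fin n)))
    (hΔΛ : ∀ i, Δ ≤ Λ i)
    (hΛΔΓ : ∀ i, ∀ x ∈ Λ i, ∃ d ∈ Δ, ∃ g ∈ Γ i, x = d + g)
    -- `l i = |Λ i / Γ i|`, witnessed by an exact transversal `t i` of `Λ i / Γ i`
    (l : Fin J → ℕ) (hl : ∀ i, 0 < l i)
    (t : (i : Fin J) → Fin (l i) → EuclideanSpace ℝ (Fin n))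
    (htmem : ∀ i a, t i a ∈ Λ i)
    (htdist : ∀ i, ∀ a b, a ≠ b → t i a - t i b ∉ Γ i)
    (htcover : ∀ i, ∀ x ∈ Λ i, ∃ a, x - t i a ∈ Γ i) :
    ∃ K : Multiset (EuclideanSpace ℝ (Fin n)), K ≠ 0 ∧
      (∀ x ∈ K, x ∈ Δ) ∧
      ∀ i : Fin J, ∀ γ ∈ Λ i,
        ((K.countP fun x => ∃ g ∈ Γ i, x = γ + g : ℕ) : ℝ) / (Multiset.card K : ℝ) =
          1 / (l i : ℝ) := by
  have hrep : ∀ i a, ∃ x ∈ Δ, x - t i a ∈ Γ i := fun i a => by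
    obtain ⟨x, hxΔ, g, hg, hx⟩ := hΛΔΓ i (t i a) (htmem i a)
    exact ⟨x, hxΔ, by simpa [hx] using (Γ i).neg_mem hg⟩
  choose d hdΔ hdt using hrep
  have : ∀ i, Nonempty (Fin (l i)) := fun i => ⟨⟨0, hl i⟩⟩
  refine ⟨minkowskiSum d, minkowskiSum_ne_zero d, fun x => mem_of_mem_minkowskiSum hdΔ,
    fun i γ hγ => ?_⟩
  have hcount := countP_minkowskiSum_mul_card (fun j a => hΔΛ i (hdΔ j a)) i
    (fun c => existsUnique_sub_mem_of_sub_mem_transversal (htdist i) (htcover i) (hdt i)) hγ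
  have hcoset : ∀ x, (∃ g ∈ Γ i, x = γ + g) ↔ x - γ ∈ Γ i := fun x =>
    ⟨by rintro ⟨g, hg, rfl⟩; simpa using hg, fun h => ⟨x - γ, h, by abel⟩⟩
  have hpos : (minkowskiSum d).countP (· - γ ∈ Γ i) ≠ 0 := by
    intro h
    rw [h, zero_mul, eq_comm, Multiset.card_eq_zero] at hcount
    exact minkowskiSum_ne_zero d hcount
  simp only [hcoset, ← hcount, Fintype.card_fin, Nat.cast_mul]
  rw [div_mul_cancel_left₀ (by exact_mod_cast hpos), one_div]

/-- existence of a finite multiset `K ⊆ Δ` containing an equal number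
of points from each coset of `Λᵢ/Γᵢ`, simultaneously for all `i`. -/
theorem stmt17 {n J : ℕ} (Γ Λ : Fin J → AddSubgroup (EuclideanSpace ℝ (Fin n)))
    (hΓ : ∀ i, IsFullLattice (Γ i)) (hΛ : ∀ i, IsFullLattice (Λ i))
    (hsub : ∀ i, Γ i ≤ Λ i)
    (Δ : AddSubgroup (EuclideanSpace ℝ (Fin n))) (hΔ : IsFullLattice Δ)
    (hΔΛ : ∀ i, Δ ≤ Λ i)
    (hΛΔΓ : ∀ i, ∀ x ∈ Λ i, ∃ d ∈ Δ, ∃ g ∈ Γ i, x = d + g)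
    -- `l i = |Λ i / Γ i|`, witnessed by an exact transversal `t i` of `Λ i / Γ i`
    (l : Fin J → ℕ) (hl : ∀ i, 0 < l i)
    (t : (i : Fin J) → Fin (l i) → EuclideanSpace ℝ (Fin n))
    (htmem : ∀ i a, t i a ∈ Λ i)
    (htdist : ∀ i, ∀ a b, a ≠ b → t i a - t i b ∉ Γ i)
    (htcover : ∀ i, ∀ x ∈ Λ i, ∃ a, x - t i a ∈ Γ i) :
    ∃ K : Multiset (EuclideanSpace ℝ (Fin n)), K ≠ 0 ∧
      (∀ x ∈ K, x ∈ Δ) ∧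
      ∀ i : Fin J, ∀ γ ∈ Λ i,
        ((K.countP fun x => ∃ g ∈ Γ i, x = γ + g : ℕ) : ℝ) / (Multiset.card K : ℝ) =
          1 / (l i : ℝ) :=
  stmt17_general Γ Λ Δ hΔΛ hΛΔΓ l hl t htmem htdist htcover
end
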